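/- Over a separation algebra Σ, for all state predicates p, q ⊆ Σ: now(p) ⊆ past(p); past(Σ) = Σ⁺; Σ⁺ * past(p) = past(p * Σ); past(∅) = ∅; past(p * q) ⊆ past(p) * past(q); past(p) -* past(q) ⊆ past(p -* q); past(p ∩ q) ⊆ past(p) ∩ past(q); past(p ∪ q) = past(p) ∪ past(q); and past(p) ⊆ past(q) if and only if p ⊆ q. -/

import Mathlib

open Classical

/-- A separation algebra: a partial commutative monoid with a set of units.
The partial binary operation is modeled as an `Option`-valued function;
`op a b = some c` means the composition is defined and equals `c`. -/
structure SepAlg (α : Type) : Type where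
  op : α → α → Option α
  emp : Set α
  comm : ∀ a b : α, op a b = op b a
  assoc : ∀ a b c : α,
    (op a b).bind (fun x => op x c) = (op b c).bind (fun y => op a y)
  unit_exists : ∀ a : α, ∃ u ∈ emp, op a u = some a
  unit_undef : ∀ u u' : α, u ∈ emp → u' ∈ emp → u ≠ u' → op u u' = none

/-- Separating conjunction of predicates. -/
def SepAlg.sepConj {α : Type} (A : SepAlg α) (p q : Set α) : Set α :=
  { s | ∃ a ∈ p, ∃ b ∈ q, A.op a b = some s }

/-- Separating implication of predicates: `p -* q = { s | {s} * p ⊆ q }`. -/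
def SepAlg.sepImp {α : Type} (A : SepAlg α) (p q : Set α) : Set α :=
  { s | ∀ a ∈ p, ∀ t : α, A.op s a = some t → t ∈ q }

/-- Lifting of a command semantics to predicates (post-image). -/
def postP {β : Type} (f : β → Set β) (p : Set β) : Set β :=
  { t | ∃ s ∈ p, t ∈ f s }

/-- Locality of a command semantics with respect to a separation algebra. -/
def IsLocalCmd {α : Type} (A : SepAlg α) (f : α → Set α) : Prop :=
  ∀ p q o : Set α, postP f p ⊆ q → postP f (A.sepConj p o) ⊆ A.sepConj q o

/-- Weakest precondition. -/
def wpre {α : Type} (f : α → Set α) (q : Set α) : Set α := { s | f s ⊆ q }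

/-- The future predicate `⟨p⟩ c ⟨q⟩ := p -* wp(c)(q)`. -/
def fut {α : Type} (A : SepAlg α) (f : α → Set α) (p q : Set α) : Set α :=
  A.sepImp p (wpre f q)

/-- Pointwise lifting of a partial composition to lists (defined iff the lists
have equal length and are pointwise composable). -/
def listOp {β : Type} (f : β → β → Option β) : List β → List β → Option (List β)
  | [], [] => some []
  | a :: as, b :: bs => do
      let c ← f a b
      let cs ← listOp f as bs
      pure (c :: cs)
  | _, _ => none

/-- Separating conjunction of history predicates. -/
def hSep {β : Type} (f : β → β → Option β) (a b : Set (List β)) : Set (List β) :=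
  { σ | ∃ τ₁ ∈ a, ∃ τ₂ ∈ b, listOp f τ₁ τ₂ = some σ }

/-- Separating implication of history predicates (restricted to nonempty
sequences, i.e. to Σ⁺). -/
def hSepImp {β : Type} (f : β → β → Option β) (a b : Set (List β)) : Set (List β) :=
  { σ | σ ≠ [] ∧ ∀ τ ∈ a, ∀ ρ : List β, listOp f σ τ = some ρ → ρ ∈ b }

/-- Frameable history predicates: closed under duplicating the last state. -/
def Frameable {β : Type} (a : Set (List β)) : Prop :=
  ∀ (σ : List β) (s : β), σ ++ [s] ∈ a → σ ++ [s, s] ∈ a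

/-- The now predicate `now(p)`. -/
def nowP {α : Type} (p : Set α) : Set (List α) :=
  { σ | ∃ (ρ : List α) (s : α), s ∈ p ∧ σ = ρ ++ [s] }

/-- The past predicate `past(p)`. -/
def pastP {α : Type} (p : Set α) : Set (List α) :=
  { σ | ∃ (ρ₁ : List α) (s : α) (ρ₂ : List α), s ∈ p ∧ σ = ρ₁ ++ s :: ρ₂ }

/-- Lifting of a command semantics to computation histories. -/
def lsem {α : Type} (f : α → Set α) (σ : List α) : Set (List α) :=
  { τ | ∃ (ρ : List α) (s₁ s₂ : α), σ = ρ ++ [s₁] ∧ s₂ ∈ f s₁ ∧ τ = ρ ++ [s₁, s₂] }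

/-- Weakest precondition on history predicates (over Σ⁺, i.e. nonempty sequences). -/
def hwp {α : Type} (f : α → Set α) (a : Set (List α)) : Set (List α) :=
  { σ | σ ≠ [] ∧ lsem f σ ⊆ a }

/-!
A history lies in `past p` exactly when one of its states lies in `p`, which settles the
lattice-theoretic properties at once. For `past (p * q) ⊆ past p * past q`, a state `a * b` of a
history is the composite of the history with `a` in its place and the history with `b` at that
position and units everywhere else. For the separating implication: if no
state `s` of `σ` lies in `p -* q`, choose for each `s` a partner in `p` whose composite with `s`
falls outside `q`; these partners form a history in `past p` whose composite with `σ` is not in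
`past q`.
-/

section ListOp

variable {β : Type} (f : β → β → Option β)

@[simp]
lemma listOp_cons_cons_eq_some {a b : β} {as bs cs : List β} :
    listOp f (a :: as) (b :: bs) = some cs ↔
      ∃ c cs', f a b = some c ∧ listOp f as bs = some cs' ∧ cs = c :: cs' := by
  simp only [listOp, Option.bind_eq_bind, Option.pure_def, Option.bind_eq_some_iff,
    Option.some.injEq]
  exact ⟨fun ⟨c, hc, cs', hcs', h⟩ => ⟨c, cs', hc, hcs', h.symm⟩,
    fun ⟨c, cs', hc, hcs', h⟩ => ⟨c, hc, cs', hcs', h.symm⟩⟩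

lemma listOp_append {as bs cs as' bs' cs' : List β} (h : listOp f as bs = some cs)
    (h' : listOp f as' bs' = some cs') :
    listOp f (as ++ as') (bs ++ bs') = some (cs ++ cs') := by
  induction as generalizing bs cs with
  | nil => cases bs <;> simp_all [listOp]
  | cons a as ih =>
    cases bs with
    | nil => simp [listOp] at h
    | cons b bs =>
      obtain ⟨c, cs, hc, hcs, rfl⟩ := (listOp_cons_cons_eq_some f).1 h
      exact (listOp_cons_cons_eq_some f).2 ⟨c, _, hc, ih hcs, rfl⟩

lemma exists_mem_listOp_eq_some_of_mem_right {as bs cs : List β}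
    (h : listOp f as bs = some cs) {b : β} (hb : b ∈ bs) :
    ∃ a ∈ as, ∃ c ∈ cs, f a b = some c := by
  induction as generalizing bs cs with
  | nil => cases bs <;> simp_all [listOp]
  | cons a as ih =>
    cases bs with
    | nil => simp at hb
    | cons b' bs =>
      obtain ⟨c, cs, hc, hcs, rfl⟩ := (listOp_cons_cons_eq_some f).1 h
      rcases List.mem_cons.1 hb with rfl | hb
      · exact ⟨a, List.mem_cons_self, c, List.mem_cons_self, hc⟩
      · obtain ⟨a', ha', c', hc', hf⟩ := ih hcs hb
        exact ⟨a', List.mem_cons_of_mem _ ha', c', List.mem_cons_of_mem _ hc', hf⟩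

lemma exists_listOp_eq_some_of_forall_mem {P Q : Set β} {as : List β}
    (h : ∀ a ∈ as, ∃ b ∈ P, ∃ c ∈ Q, f a b = some c) :
    ∃ bs cs, listOp f as bs = some cs ∧ bs.length = as.length ∧
      (∀ b ∈ bs, b ∈ P) ∧ ∀ c ∈ cs, c ∈ Q := by
  induction as with
  | nil => exact ⟨[], [], rfl, rfl, by simp, by simp⟩
  | cons a as ih =>
    obtain ⟨b, hb, c, hc, hf⟩ := h a List.mem_cons_self
    obtain ⟨bs, cs, hop, hlen, hbs, hcs⟩ := ih fun a' ha' => h a' (List.mem_cons_of_mem _ ha')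
    refine ⟨b :: bs, c :: cs, (listOp_cons_cons_eq_some f).2 ⟨c, cs, hf, hop, rfl⟩, by simp [hlen], ?_, ?_⟩
    · simpa using ⟨hb, hbs⟩
    · simpa using ⟨hc, hcs⟩

end ListOp

namespace SepAlg

variable {α : Type} (A : SepAlg α)

lemma sepConj_comm (p q : Set α) : A.sepConj p q = A.sepConj q p := by
  ext s
  constructor <;>
  · rintro ⟨a, ha, b, hb, hab⟩
    exact ⟨b, hb, a, ha, (A.comm b a).trans hab⟩

lemma exists_listOp_eq_self (σ : List α) : ∃ υ, listOp A.op σ υ = some σ := by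
  induction σ with
  | nil => exact ⟨[], rfl⟩
  | cons s σ ih =>
    obtain ⟨υ, hυ⟩ := ih
    obtain ⟨u, -, hu⟩ := A.unit_exists s
    exact ⟨u :: υ, (listOp_cons_cons_eq_some _).2 ⟨s, σ, hu, hυ, rfl⟩⟩

lemma exists_listOp_splice (ρ₁ ρ₂ : List α) {a b s : α} (h : A.op a b = some s) :
    ∃ υ₁ υ₂, listOp A.op (ρ₁ ++ a :: ρ₂) (υ₁ ++ b :: υ₂) = some (ρ₁ ++ s :: ρ₂) := by
  obtain ⟨υ₁, hυ₁⟩ := A.exists_listOp_eq_self ρ₁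
  obtain ⟨υ₂, hυ₂⟩ := A.exists_listOp_eq_self ρ₂
  exact ⟨υ₁, υ₂, listOp_append _ hυ₁ ((listOp_cons_cons_eq_some _).2 ⟨s, ρ₂, h, hυ₂, rfl⟩)⟩

end SepAlg

section Past

variable {α : Type} {p q : Set α}

@[simp]
lemma mem_pastP {σ : List α} : σ ∈ pastP p ↔ ∃ s ∈ σ, s ∈ p := by
  constructor
  · rintro ⟨ρ₁, s, ρ₂, hs, rfl⟩
    exact ⟨s, by simp, hs⟩
  · rintro ⟨s, hsσ, hs⟩
    obtain ⟨ρ₁, ρ₂, rfl⟩ := List.append_of_mem hsσ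
    exact ⟨ρ₁, s, ρ₂, hs, rfl⟩

lemma nowP_subset_pastP : nowP p ⊆ pastP p := by
  rintro σ ⟨ρ, s, hs, rfl⟩
  exact mem_pastP.2 ⟨s, by simp, hs⟩

lemma pastP_univ : pastP (Set.univ : Set α) = { σ | σ ≠ [] } := by
  ext σ
  simpa using ⟨fun ⟨_, hs⟩ => List.ne_nil_of_mem hs, List.exists_mem_of_ne_nil σ⟩

lemma pastP_empty : pastP (∅ : Set α) = ∅ := by
  ext σ
  simp

lemma pastP_inter_subset : pastP (p ∩ q) ⊆ pastP p ∩ pastP q := by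
  rintro σ ⟨ρ₁, s, ρ₂, ⟨hp, hq⟩, rfl⟩
  exact ⟨⟨ρ₁, s, ρ₂, hp, rfl⟩, ⟨ρ₁, s, ρ₂, hq, rfl⟩⟩

lemma pastP_union : pastP (p ∪ q) = pastP p ∪ pastP q := by
  ext σ
  simp only [mem_pastP, Set.mem_union, ← exists_or, and_or_left]

lemma pastP_subset_pastP_iff : pastP p ⊆ pastP q ↔ p ⊆ q := by
  refine ⟨fun h s hs => ?_, fun h σ hσ => ?_⟩
  · simpa using h (mem_pastP.2 ⟨s, List.mem_singleton_self s, hs⟩)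
  · obtain ⟨s, hsσ, hs⟩ := mem_pastP.1 hσ
    exact mem_pastP.2 ⟨s, hsσ, h hs⟩

variable (A : SepAlg α)

lemma pastP_sepConj_subset_hSep : pastP (A.sepConj p q) ⊆ hSep A.op (pastP p) (pastP q) := by
  rintro σ ⟨ρ₁, s, ρ₂, ⟨a, ha, b, hb, hab⟩, rfl⟩
  obtain ⟨υ₁, υ₂, hop⟩ := A.exists_listOp_splice ρ₁ ρ₂ hab
  exact ⟨_, ⟨ρ₁, a, ρ₂, ha, rfl⟩, _, ⟨υ₁, b, υ₂, hb, rfl⟩, hop⟩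

lemma hSep_ne_nil_pastP :
    hSep A.op { σ | σ ≠ [] } (pastP p) = pastP (A.sepConj p Set.univ) := by
  refine subset_antisymm ?_ ?_
  · rintro σ ⟨τ₁, -, τ₂, hτ₂, hop⟩
    obtain ⟨a, haτ₂, ha⟩ := mem_pastP.1 hτ₂
    obtain ⟨x, -, s, hsσ, hxa⟩ := exists_mem_listOp_eq_some_of_mem_right _ hop haτ₂
    exact mem_pastP.2 ⟨s, hsσ, a, ha, x, trivial, (A.comm a x).trans hxa⟩
  · rw [A.sepConj_comm, ← pastP_univ]
    exact pastP_sepConj_subset_hSep A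

lemma hSepImp_pastP_subset_pastP_sepImp :
    hSepImp A.op (pastP p) (pastP q) ⊆ pastP (A.sepImp p q) := by
  rintro σ ⟨hσ, himp⟩
  by_contra hnot
  have hwit : ∀ s ∈ σ, ∃ a ∈ p, ∃ t ∈ qᶜ, A.op s a = some t := by
    intro s hsσ
    by_contra! hs
    exact hnot (mem_pastP.2 ⟨s, hsσ, fun a ha t hst => not_not.1 (hs a ha t · hst)⟩)
  obtain ⟨τ, ρ, hop, hlen, hτ, hρ⟩ := exists_listOp_eq_some_of_forall_mem _ hwit
  obtain ⟨a, haτ⟩ := List.exists_mem_of_ne_nil τ (List.length_pos_iff.1 (hlen ▸ List.length_pos_iff.2 hσ))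
  obtain ⟨t, htρ, ht⟩ := mem_pastP.1 (himp τ (mem_pastP.2 ⟨a, haτ, hτ a haτ⟩) ρ hop)
  exact hρ t htρ ht

end Past

/-- properties of the past operator. -/
theorem stmt8 {α : Type} (A : SepAlg α) (p q : Set α) :
    nowP p ⊆ pastP p ∧
    pastP (Set.univ : Set α) = { σ : List α | σ ≠ [] } ∧
    hSep A.op { σ : List α | σ ≠ [] } (pastP p) =
      pastP (A.sepConj p (Set.univ : Set α)) ∧
    pastP (∅ : Set α) = (∅ : Set (List α)) ∧
    pastP (A.sepConj p q) ⊆ hSep A.op (pastP p) (pastP q) ∧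
    hSepImp A.op (pastP p) (pastP q) ⊆ pastP (A.sepImp p q) ∧
    pastP (p ∩ q) ⊆ pastP p ∩ pastP q ∧
    pastP (p ∪ q) = pastP p ∪ pastP q ∧
    (pastP p ⊆ pastP q ↔ p ⊆ q) :=
  ⟨nowP_subset_pastP, pastP_univ, hSep_ne_nil_pastP A, pastP_empty,
    pastP_sepConj_subset_hSep A, hSepImp_pastP_subset_pastP_sepImp A, pastP_inter_subset,
    pastP_union, pastP_subset_pastP_iff⟩
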